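/- For the Poincaré ball of radius r with distance d_D, and fixed distinct unit directions u, v, let p = t·r·u and q = t·r·v; then as t → 1⁻, d_D(p,q)/(d_D(p,0)+d_D(0,q)) → 1. -/

import Mathlib

open Filter Real

noncomputable def artanh (x : ℝ) : ℝ := (1 / 2) * Real.log ((1 + x) / (1 - x))

noncomputable def mobiusAdd (r : ℝ) {n : ℕ} (a b : EuclideanSpace ℝ (Fin n)) :
    EuclideanSpace ℝ (Fin n) :=
  (1 / (1 + 2 * (inner ℝ a b : ℝ) / r ^ 2 + ‖a‖ ^ 2 * ‖b‖ ^ 2 / r ^ 4)) •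
    ((1 + 2 * (inner ℝ a b : ℝ) / r ^ 2 + ‖b‖ ^ 2 / r ^ 2) • a + (1 - ‖a‖ ^ 2 / r ^ 2) • b)

noncomputable def pDist (r : ℝ) {n : ℕ} (p q : EuclideanSpace ℝ (Fin n)) : ℝ :=
  2 * r * _root_.artanh (‖mobiusAdd r (-p) q‖ / r)

lemma mobiusAdd_zero_right (r : ℝ) {n : ℕ} (a : EuclideanSpace ℝ (Fin n)) :
    mobiusAdd r a 0 = a := by
  simp [mobiusAdd]

lemma mobiusAdd_zero_left (r : ℝ) {n : ℕ} (b : EuclideanSpace ℝ (Fin n)) :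
    mobiusAdd r 0 b = b := by
  simp [mobiusAdd]

lemma norm_mobius_formula (r : ℝ) (hr : 0 < r) {n : ℕ}
    (u v : EuclideanSpace ℝ (Fin n)) (hu : ‖u‖ = 1) (hv : ‖v‖ = 1)
    (hc : (inner ℝ u v : ℝ) < 1) (t : ℝ) (ht0 : 0 < t) (_ht1 : t < 1) :
    ‖mobiusAdd r (-((t * r) • u)) ((t * r) • v)‖ / r
      = Real.sqrt (2 * t ^ 2 * (1 - (inner ℝ u v : ℝ))
          / (1 - 2 * t ^ 2 * (inner ℝ u v : ℝ) + t ^ 4)) := by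
  set c : ℝ := inner ℝ u v with hcdef
  have hD : (0:ℝ) < 1 - 2 * t ^ 2 * c + t ^ 4 := by
    nlinarith [sq_nonneg (1 - t^2), mul_pos (pow_pos ht0 2) (sub_pos.mpr hc)]
  have hip : (inner ℝ (-((t * r) • u)) ((t * r) • v) : ℝ) = -(t^2 * r^2 * c) := by
    rw [inner_neg_left, real_inner_smul_left, real_inner_smul_right]
    ring
  have hnp : ‖-((t * r) • u)‖ = t * r := by
    rw [norm_neg, norm_smul, hu, Real.norm_eq_abs, abs_of_pos (by positivity)]
    ring
  have hnq : ‖(t * r) • v‖ = t * r := by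
    rw [norm_smul, hv, Real.norm_eq_abs, abs_of_pos (by positivity)]
    ring
  have key : (‖mobiusAdd r (-((t * r) • u)) ((t * r) • v)‖ / r) ^ 2
      = 2 * t ^ 2 * (1 - c) / (1 - 2 * t ^ 2 * c + t ^ 4) := by
    rw [mobiusAdd, hip, hnp, hnq]
    have hr2 : r ^ 2 ≠ 0 := by positivity
    have e1 : (1 + 2 * -(t ^ 2 * r ^ 2 * c) / r ^ 2 + (t*r) ^ 2 * (t*r) ^ 2 / r ^ 4)
        = 1 - 2 * t ^ 2 * c + t ^ 4 := by field_simp; ring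
    have e2 : (1 + 2 * -(t ^ 2 * r ^ 2 * c) / r ^ 2 + (t*r) ^ 2 / r ^ 2)
        = 1 - 2 * t ^ 2 * c + t ^ 2 := by field_simp; ring
    have e3 : (1 - (t*r) ^ 2 / r ^ 2) = 1 - t ^ 2 := by field_simp
    rw [e1, e2, e3, norm_smul]
    have hvec : ((1 - 2 * t ^ 2 * c + t ^ 2) • (-((t * r) • u)) + (1 - t ^ 2) • ((t * r) • v))
        = (-((1 - 2 * t ^ 2 * c + t ^ 2) * (t * r))) • u + ((1 - t ^ 2) * (t * r)) • v := by
      module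
    rw [hvec]
    have hnorm2 : ‖(-((1 - 2 * t ^ 2 * c + t ^ 2) * (t * r))) • u + ((1 - t ^ 2) * (t * r)) • v‖ ^ 2
        = (-((1 - 2 * t ^ 2 * c + t ^ 2) * (t * r)))^2 + ((1 - t ^ 2) * (t * r))^2
          + 2 * ((-((1 - 2 * t ^ 2 * c + t ^ 2) * (t * r))) * ((1 - t ^ 2) * (t * r)) * c) := by
      rw [norm_add_sq_real, real_inner_smul_left, real_inner_smul_right,
        norm_smul, norm_smul, hu, hv, ← hcdef]
      simp [Real.norm_eq_abs, sq_abs, mul_pow]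
      ring
    rw [Real.norm_eq_abs,
      abs_of_pos (show (0:ℝ) < 1/(1 - 2 * t ^ 2 * c + t ^ 4) by positivity)]
    have hre : ((1/(1 - 2 * t ^ 2 * c + t ^ 4)) * ‖(-((1 - 2 * t ^ 2 * c + t ^ 2) * (t * r))) • u + ((1 - t ^ 2) * (t * r)) • v‖ / r)^2
        = (1/(1 - 2 * t ^ 2 * c + t ^ 4))^2 * (‖(-((1 - 2 * t ^ 2 * c + t ^ 2) * (t * r))) • u + ((1 - t ^ 2) * (t * r)) • v‖^2) / r^2 := by
      ring
    rw [hre, hnorm2]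
    field_simp
    ring
  have hnn : 0 ≤ ‖mobiusAdd r (-((t * r) • u)) ((t * r) • v)‖ / r := by positivity
  rw [← key, Real.sqrt_sq hnn]

theorem poincare_near_boundary_additive {n : ℕ} (r : ℝ) (hr : 0 < r)
    (u v : EuclideanSpace ℝ (Fin n)) (hu : ‖u‖ = 1) (hv : ‖v‖ = 1) (huv : u ≠ v) :
    Filter.Tendsto
      (fun t : ℝ =>
        pDist r ((t * r) • u) ((t * r) • v) /
          (pDist r ((t * r) • u) 0 + pDist r 0 ((t * r) • v)))
      (nhdsWithin 1 (Set.Iio 1)) (nhds 1) := by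
  have hr' : r ≠ 0 := ne_of_gt hr
  set c : ℝ := inner ℝ u v with hcdef
  have hc : c < 1 := by
    have h2 : ‖u - v‖ ^ 2 = 2 - 2 * c := by
      rw [norm_sub_sq_real, hu, hv, ← hcdef]; ring
    have h1 : 0 < ‖u - v‖ := norm_pos_iff.mpr (sub_ne_zero.mpr huv)
    nlinarith
  set f : ℝ → ℝ := fun t => Real.sqrt (2 * t ^ 2 * (1 - c) / (1 - 2 * t ^ 2 * c + t ^ 4))
    with hfdef
  set g : ℝ → ℝ := fun t => Real.log ((1 + f t) ^ 2 * (1 - 2 * t ^ 2 * c + t ^ 4)) with hgdef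
  set num2 : ℝ → ℝ := fun t => g t - 4 * Real.log (1 + t) with hnum2def
  set den2 : ℝ → ℝ := fun t => 2 * Real.log (1 + t) - 2 * Real.log (1 - t) with hden2def
  -- den2 → atTop
  have hsub : Tendsto (fun t : ℝ => 1 - t) (nhdsWithin 1 (Set.Iio 1))
      (nhdsWithin 0 (Set.Ioi 0)) := by
    apply tendsto_nhdsWithin_of_tendsto_nhds_of_eventually_within
    · have hco : Continuous (fun t : ℝ => 1 - t) := by continuity
      have : Tendsto (fun t : ℝ => 1 - t) (nhds 1) (nhds 0) := by
        simpa using hco.tendsto 1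
      exact this.mono_left nhdsWithin_le_nhds
    · filter_upwards [self_mem_nhdsWithin] with t ht
      simp only [Set.mem_Iio] at ht
      simp [Set.mem_Ioi, ht]
  have hlogbot : Tendsto (fun t : ℝ => Real.log (1 - t)) (nhdsWithin 1 (Set.Iio 1)) atBot :=
    Real.tendsto_log_nhdsGT_zero.comp hsub
  have hlog2 : Tendsto (fun t : ℝ => 2 * Real.log (1 + t)) (nhdsWithin 1 (Set.Iio 1))
      (nhds (2 * Real.log (1 + 1))) := by
    have : ContinuousAt (fun t : ℝ => 2 * Real.log (1 + t)) 1 := by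
      apply ContinuousAt.mul continuousAt_const
      apply ContinuousAt.log (by fun_prop) (by norm_num)
    exact this.tendsto.mono_left nhdsWithin_le_nhds
  have hden2top : Tendsto den2 (nhdsWithin 1 (Set.Iio 1)) atTop := by
    have h1 : Tendsto (fun t : ℝ => -Real.log (1 - t)) (nhdsWithin 1 (Set.Iio 1)) atTop :=
      tendsto_neg_atBot_atTop.comp hlogbot
    have h2 : Tendsto (fun t : ℝ => 2 * -Real.log (1 - t)) (nhdsWithin 1 (Set.Iio 1)) atTop :=
      Tendsto.const_mul_atTop (show (0:ℝ) < 2 by norm_num) h1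
    have h3 := Tendsto.add_atTop hlog2 h2
    refine h3.congr fun t => ?_
    simp only [hden2def]
    ring
  -- num2 tends to a finite limit
  have hnum2lim : Tendsto num2 (nhdsWithin 1 (Set.Iio 1)) (nhds (num2 1)) := by
    have hD1 : (0:ℝ) < 1 - 2 * 1 ^ 2 * c + 1 ^ 4 := by norm_num; linarith
    have hq1 : ContinuousAt (fun t : ℝ => 2 * t ^ 2 * (1 - c) / (1 - 2 * t ^ 2 * c + t ^ 4)) 1 :=
      ContinuousAt.div (by fun_prop) (by fun_prop) (ne_of_gt hD1)
    have hfc : ContinuousAt f 1 := Real.continuous_sqrt.continuousAt.comp hq1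
    have hf1 : (0:ℝ) ≤ f 1 := Real.sqrt_nonneg _
    have hargpos : (0:ℝ) < (1 + f 1) ^ 2 * (1 - 2 * 1 ^ 2 * c + 1 ^ 4) :=
      mul_pos (pow_pos (by linarith) 2) hD1
    have hgc : ContinuousAt g 1 :=
      ContinuousAt.log (((continuousAt_const.add hfc).pow 2).mul (by fun_prop))
        (ne_of_gt hargpos)
    have hnc : ContinuousAt num2 1 :=
      hgc.sub (continuousAt_const.mul (ContinuousAt.log (by fun_prop) (by norm_num)))
    exact hnc.tendsto.mono_left nhdsWithin_le_nhds
  -- combined limit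
  have hmain : Tendsto (fun t => 1 + num2 t / den2 t) (nhdsWithin 1 (Set.Iio 1)) (nhds 1) := by
    have h0 : Tendsto (fun t => num2 t / den2 t) (nhdsWithin 1 (Set.Iio 1)) (nhds 0) :=
      Tendsto.div_atTop hnum2lim hden2top
    have := h0.const_add 1
    simpa using this
  refine hmain.congr' ?_
  have hev : ∀ᶠ t in nhdsWithin 1 (Set.Iio 1), t ∈ Set.Ioo (0:ℝ) 1 ∧ 0 < den2 t := by
    filter_upwards [Ioo_mem_nhdsLT_of_mem (show (1:ℝ) ∈ Set.Ioc (0:ℝ) 1 by constructor <;> norm_num),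
      hden2top.eventually (eventually_gt_atTop 0)] with t h1 h2
    exact ⟨h1, h2⟩
  filter_upwards [hev] with t ⟨⟨ht0, ht1⟩, hdpos⟩
  have hD : (0:ℝ) < 1 - 2 * t ^ 2 * c + t ^ 4 := by
    nlinarith [sq_nonneg (1 - t^2), mul_pos (pow_pos ht0 2) (sub_pos.mpr hc)]
  have hfnn : 0 ≤ f t := Real.sqrt_nonneg _
  have hfsq : f t ^ 2 = 2 * t ^ 2 * (1 - c) / (1 - 2 * t ^ 2 * c + t ^ 4) :=
    Real.sq_sqrt (div_nonneg (by nlinarith) hD.le)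
  have hflt : f t < 1 := by
    have h1t : (0:ℝ) < 1 - t ^ 2 := by nlinarith
    have hsq : f t ^ 2 < 1 := by
      rw [hfsq, div_lt_one hD]
      nlinarith [mul_pos h1t h1t]
    nlinarith
  -- log expansions
  have l1ne : (1:ℝ) - t ≠ 0 := by linarith
  have l2ne : (1:ℝ) + t ≠ 0 := by linarith
  have la : _root_.artanh t = (1/2) * (Real.log (1 + t) - Real.log (1 - t)) := by
    rw [_root_.artanh, Real.log_div l2ne l1ne]
  have hkey : (1 - f t ^ 2) * (1 - 2 * t ^ 2 * c + t ^ 4) = (1 - t)^2 * (1 + t)^2 := by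
    rw [hfsq]; field_simp; ring
  have hq : (1 + f t) / (1 - f t)
      = ((1 + f t)^2 * (1 - 2 * t ^ 2 * c + t ^ 4)) / ((1 - t)^2 * (1 + t)^2) := by
    rw [div_eq_div_iff (by linarith) (by positivity)]
    linear_combination (-(1 + f t)) * hkey
  have h1pf : (0:ℝ) < 1 + f t := by linarith
  have lb : _root_.artanh (f t) = (1/2) * (g t - 2 * Real.log (1 - t) - 2 * Real.log (1 + t)) := by
    have hA : ((1 + f t) ^ 2 * (1 - 2 * t ^ 2 * c + t ^ 4)) ≠ 0 :=
      ne_of_gt (mul_pos (pow_pos h1pf 2) hD)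
    have hB : ((1 - t) ^ 2 * (1 + t) ^ 2) ≠ 0 :=
      ne_of_gt (mul_pos (pow_pos (by linarith) 2) (pow_pos (by linarith) 2))
    rw [_root_.artanh, hq]
    simp only [hgdef]
    rw [Real.log_div hA hB,
      Real.log_mul (pow_ne_zero 2 (ne_of_gt h1pf)) (ne_of_gt hD),
      Real.log_mul (pow_ne_zero 2 l1ne) (pow_ne_zero 2 l2ne),
      Real.log_pow, Real.log_pow, Real.log_pow]
    push_cast
    ring
  -- pDist computations
  have pd1 : pDist r ((t * r) • u) ((t * r) • v) = 2 * r * _root_.artanh (f t) := by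
    rw [pDist, norm_mobius_formula r hr u v hu hv (hcdef ▸ hc) t ht0 ht1, hfdef, hcdef]
  have hnu : ‖-((t * r) • u)‖ / r = t := by
    rw [norm_neg, norm_smul, hu, Real.norm_eq_abs, abs_of_pos (by positivity)]
    field_simp
  have hnv : ‖(t * r) • v‖ / r = t := by
    rw [norm_smul, hv, Real.norm_eq_abs, abs_of_pos (by positivity)]
    field_simp
  have pd2 : pDist r ((t * r) • u) 0 = 2 * r * _root_.artanh t := by
    rw [pDist, mobiusAdd_zero_right, hnu]
  have pd3 : pDist r 0 ((t * r) • v) = 2 * r * _root_.artanh t := by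
    rw [pDist, neg_zero, mobiusAdd_zero_left, hnv]
  rw [pd1, pd2, pd3, la, lb]
  have hden2ne : den2 t ≠ 0 := ne_of_gt hdpos
  have e1 : 2 * r * ((1/2) * (g t - 2 * Real.log (1 - t) - 2 * Real.log (1 + t)))
      = r * (num2 t + den2 t) := by
    rw [hnum2def, hden2def]; ring
  have e2 : 2 * r * ((1/2) * (Real.log (1 + t) - Real.log (1 - t)))
      + 2 * r * ((1/2) * (Real.log (1 + t) - Real.log (1 - t))) = r * den2 t := by
    rw [hden2def]; ring
  rw [e1, e2, mul_div_mul_left _ _ hr', add_div, div_self hden2ne]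
  ring
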